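/- arXiv:math/0010213 — 4 statements merged into one kernel-verified Lean document; each statement's English description precedes it below -/
import Mathlib

section
/- Under the same hypotheses together with the unimodality of each inserted facet's h-vector, one has h_k(Delta) \le h_{d-k}(Delta) for all k \le d/2. -/
open Finset

/-- Theorem `ineq3` (abstract form): with `h_k(Δ) = h_k(Σ) - ∑_Γ h_k(Γ)`,
Dehn–Sommerville for `Σ` and for each inserted facet `Γ`, unimodality of each
`h(Γ)`, and `h_0(Δ) = h_d(Δ) = 1`, one has `h_k(Δ) ≤ h_{d-k}(Δ)` for
all `k ≤ d/2`. -/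
theorem h_le_h_dual (d : ℕ) (hd : 1 ≤ d) (ι : Type*) [Fintype ι]
    (hS : ℕ → ℝ) (hG : ι → ℕ → ℝ) (hD : ℕ → ℝ)
    (hDS_S : ∀ k ≤ d, hS k = hS (d - k))
    (hDS_G : ∀ G : ι, ∀ k ≤ d - 1, hG G k = hG G (d - 1 - k))
    (htop : ∀ G : ι, hG G d = 0)
    (huni : ∀ G : ι, ∀ k : ℕ, k + 1 ≤ (d - 1) / 2 →
      hG G k ≤ hG G (k + 1))
    (huni' : ∀ G : ι, ∀ k : ℕ, (d - 1) / 2 ≤ k → k + 1 ≤ d - 1 →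
      hG G (k + 1) ≤ hG G k)
    (hdef : ∀ k ≤ d, hD k = hS k - ∑ G : ι, hG G k)
    (h0 : hD 0 = 1) (hdtop : hD d = 1) :
    ∀ k : ℕ, 2 * k ≤ d → hD k ≤ hD (d - k) := by
  intro k hk
  rcases eq_or_ne k 0 with rfl | hk0
  · rw [Nat.sub_zero, h0, hdtop]
  rcases eq_or_lt_of_le hk with heq | hlt
  · rw [show d - k = k by omega]
  · rw [hdef k (by omega), hdef (d - k) (by omega), hDS_S k (by omega)]
    apply sub_le_sub_left
    apply Finset.sum_le_sum
    intro G _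
    have h1 : hG G (d - k) = hG G (k - 1) := by
      have := hDS_G G (d - k) (by omega)
      rwa [show d - 1 - (d - k) = k - 1 by omega] at this
    have h2 : hG G (k - 1) ≤ hG G k := by
      have := huni G (k - 1) (by omega)
      rwa [show k - 1 + 1 = k by omega] at this
    linarith
end

section
/- For integers 1 \le k < l \le d/2 and d/2 \le m \le d, the ratio (\binom{m}{k}+\binom{d-m}{k})/(\binom{m}{l}+\binom{d-m}{l}) is at most (\binom{\lfloor d/2\rfloor}{k}+\binom{\lceil d/2\rceil}{k})/(\binom{\lfloor d/2\rfloor}{l}+\binom{\lceil d/2\rceil}{l}). -/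
/-- Cross-ratio lemma: for `p ≤ n` and `x ≤ y`,
`C(n,x)·C(p,y) ≤ C(n,y)·C(p,x)`. -/
private lemma choose_cross_ratio {n p x y : ℕ} (hpn : p ≤ n) (hxy : x ≤ y) :
    n.choose x * p.choose y ≤ n.choose y * p.choose x := by
  rcases lt_or_ge p y with h | h
  · simp [Nat.choose_eq_zero_of_lt h]
  · have hyn : y ≤ n := h.trans hpn
    have hpos : 0 < y.choose x := Nat.choose_pos hxy
    have h1 : p.choose y * y.choose x = p.choose x * (p - x).choose (y - x) :=
      Nat.choose_mul hxy
    have h2 : n.choose y * y.choose x = n.choose x * (n - x).choose (y - x) :=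
      Nat.choose_mul hxy
    have h3 : (p - x).choose (y - x) ≤ (n - x).choose (y - x) :=
      Nat.choose_le_choose _ (Nat.sub_le_sub_right hpn x)
    have key : n.choose x * p.choose y * y.choose x ≤ n.choose y * p.choose x * y.choose x := by
      calc n.choose x * p.choose y * y.choose x
          = n.choose x * (p.choose x * (p - x).choose (y - x)) := by rw [mul_assoc, h1]
        _ ≤ n.choose x * (p.choose x * (n - x).choose (y - x)) :=
            Nat.mul_le_mul_left _ (Nat.mul_le_mul_left _ h3)
        _ = p.choose x * (n.choose x * (n - x).choose (y - x)) := by ring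
        _ = p.choose x * (n.choose y * y.choose x) := by rw [h2]
        _ = n.choose y * p.choose x * y.choose x := by ring
    exact Nat.le_of_mul_le_mul_right key hpos

/-- Log-concavity gap identity:
`(i+2)·C(n,i+1)² = (i+2)·C(n,i)·C(n,i+2) + C(n,i+1)·C(n+1,i+1)`. -/
private lemma choose_gap_identity (n i : ℕ) :
    (i + 2) * (n.choose (i + 1)) ^ 2 =
      (i + 2) * n.choose i * n.choose (i + 2) + n.choose (i + 1) * (n + 1).choose (i + 1) := by
  rcases lt_or_ge n (i + 1) with h | h
  · simp [Nat.choose_eq_zero_of_lt h, Nat.choose_eq_zero_of_lt (h.trans (Nat.lt_succ_self _))]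
  · obtain ⟨t, rfl⟩ : ∃ t, n = i + 1 + t := ⟨n - (i + 1), by omega⟩
    have h1 : (i + 1 + t).choose (i + 1) * (i + 1) = (i + 1 + t).choose i * (t + 1) := by
      have := Nat.choose_succ_right_eq (i + 1 + t) i
      simpa [show i + 1 + t - i = t + 1 by omega] using this
    have h2 : (i + 1 + t).choose (i + 2) * (i + 2) = (i + 1 + t).choose (i + 1) * t := by
      have := Nat.choose_succ_right_eq (i + 1 + t) (i + 1)
      simpa [show i + 1 + t - (i + 1) = t by omega] using this
    have h3 : (i + 1 + t + 1).choose (i + 1) * (i + 1) = (i + 1 + t).choose i * (i + t + 2) := by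
      have := Nat.add_one_mul_choose_eq (i + 1 + t) i
      -- this : (i+1+t+1) * (i+1+t).choose i = (i+1+t+1).choose (i+1) * (i+1)
      rw [← this]; ring
    apply Nat.eq_of_mul_eq_mul_left (show 0 < (i + 1) * (i + 1) by positivity)
    zify at h1 h2 h3 ⊢
    linear_combination ((i + 2) * (i + 1) * ((i + 1 + t).choose (i + 1) : ℤ)) * h1
      - ((i + 1) ^ 2 * ((i + 1 + t).choose i : ℤ)) * h2
      - ((i + 1) * ((i + 1 + t).choose (i + 1) : ℤ)) * h3

/-- The gap is monotone: for `p ≤ n`,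
`C(n,i)·C(n,i+2) + C(p,i+1)² ≤ C(n,i+1)² + C(p,i)·C(p,i+2)`. -/
private lemma gap_mono {n p : ℕ} (i : ℕ) (hpn : p ≤ n) :
    n.choose i * n.choose (i + 2) + (p.choose (i + 1)) ^ 2 ≤
      (n.choose (i + 1)) ^ 2 + p.choose i * p.choose (i + 2) := by
  have In := choose_gap_identity n i
  have Ip := choose_gap_identity p i
  have m1 : p.choose (i + 1) * (p + 1).choose (i + 1) ≤
      n.choose (i + 1) * (n + 1).choose (i + 1) :=
    Nat.mul_le_mul (Nat.choose_le_choose _ hpn) (Nat.choose_le_choose _ (by omega))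
  have key : (i + 2) * (n.choose i * n.choose (i + 2) + (p.choose (i + 1)) ^ 2) ≤
      (i + 2) * ((n.choose (i + 1)) ^ 2 + p.choose i * p.choose (i + 2)) := by
    nlinarith [In, Ip, m1]
  exact Nat.le_of_mul_le_mul_left key (by omega)

/-- Core step in `n, p` variables. -/
private lemma step_np {n p : ℕ} (i : ℕ) (hpn : p ≤ n) :
    (n.choose i + n.choose (i + 1) + p.choose (i + 1)) *
        (n.choose (i + 2) + p.choose (i + 1) + p.choose (i + 2)) ≤
      (n.choose (i + 1) + p.choose i + p.choose (i + 1)) *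
        (n.choose (i + 1) + n.choose (i + 2) + p.choose (i + 2)) := by
  have d1 := choose_cross_ratio hpn (show i ≤ i + 2 by omega)
  have d2 := choose_cross_ratio hpn (show i ≤ i + 1 by omega)
  have g := gap_mono i hpn
  nlinarith [d1, d2, g]

/-- Step in `m`: the ratio `D_{j}/D_{j+1}` decreases when `m` increases. -/
private lemma step_m {d m : ℕ} (i : ℕ) (hdm : d ≤ 2 * m) (hmd : m < d) :
    ((m + 1).choose (i + 1) + (d - (m + 1)).choose (i + 1)) *
        (m.choose (i + 2) + (d - m).choose (i + 2)) ≤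
      (m.choose (i + 1) + (d - m).choose (i + 1)) *
        ((m + 1).choose (i + 2) + (d - (m + 1)).choose (i + 2)) := by
  set p := d - (m + 1) with hp
  have e2 : d - m = p + 1 := by omega
  have hpn : p ≤ m := by omega
  rw [e2, Nat.choose_succ_succ' m i, Nat.choose_succ_succ' m (i + 1),
    Nat.choose_succ_succ' p i, Nat.choose_succ_succ' p (i + 1)]
  have := step_np i hpn
  nlinarith [this]

/-- Chain over `m`: comparing `m` with the middle `c = (d+1)/2`. -/
private lemma chain_m (d j : ℕ) (hj : 1 ≤ j) (hjd : 2 * (j + 1) ≤ d) :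
    ∀ m, (d + 1) / 2 ≤ m → m ≤ d →
      (m.choose j + (d - m).choose j) *
          (((d + 1) / 2).choose (j + 1) + (d - (d + 1) / 2).choose (j + 1)) ≤
        (((d + 1) / 2).choose j + (d - (d + 1) / 2).choose j) *
          (m.choose (j + 1) + (d - m).choose (j + 1)) := by
  obtain ⟨i, rfl⟩ : ∃ i, j = i + 1 := ⟨j - 1, by omega⟩
  intro m hm
  induction m, hm using Nat.le_induction with
  | base => intro _; apply le_of_eq; ring
  | succ m hm ih =>
    intro hmd
    have hmd' : m < d := by omega
    have ih' := ih (by omega)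
    have st := step_m i (by omega) hmd'
    have hY : 0 < m.choose (i + 2) + (d - m).choose (i + 2) :=
      Nat.add_pos_left (Nat.choose_pos (by omega)) _
    apply Nat.le_of_mul_le_mul_right _ hY
    calc ((m + 1).choose (i + 1) + (d - (m + 1)).choose (i + 1)) *
          (((d + 1) / 2).choose (i + 2) + (d - (d + 1) / 2).choose (i + 2)) *
          (m.choose (i + 2) + (d - m).choose (i + 2))
        = ((m + 1).choose (i + 1) + (d - (m + 1)).choose (i + 1)) *
            (m.choose (i + 2) + (d - m).choose (i + 2)) *
            (((d + 1) / 2).choose (i + 2) + (d - (d + 1) / 2).choose (i + 2)) := by ring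
      _ ≤ (m.choose (i + 1) + (d - m).choose (i + 1)) *
            ((m + 1).choose (i + 2) + (d - (m + 1)).choose (i + 2)) *
            (((d + 1) / 2).choose (i + 2) + (d - (d + 1) / 2).choose (i + 2)) :=
          Nat.mul_le_mul_right _ st
      _ = (m.choose (i + 1) + (d - m).choose (i + 1)) *
            (((d + 1) / 2).choose (i + 2) + (d - (d + 1) / 2).choose (i + 2)) *
            ((m + 1).choose (i + 2) + (d - (m + 1)).choose (i + 2)) := by ring
      _ ≤ (((d + 1) / 2).choose (i + 1) + (d - (d + 1) / 2).choose (i + 1)) *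
            (m.choose (i + 2) + (d - m).choose (i + 2)) *
            ((m + 1).choose (i + 2) + (d - (m + 1)).choose (i + 2)) :=
          Nat.mul_le_mul_right _ ih'
      _ = (((d + 1) / 2).choose (i + 1) + (d - (d + 1) / 2).choose (i + 1)) *
            ((m + 1).choose (i + 2) + (d - (m + 1)).choose (i + 2)) *
            (m.choose (i + 2) + (d - m).choose (i + 2)) := by ring

/-- Chain over `j`. -/
private lemma chain_j (d k m : ℕ) (hk : 1 ≤ k) (hm : (d + 1) / 2 ≤ m) (hmd : m ≤ d) :
    ∀ j, k ≤ j → 2 * j ≤ d →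
      (m.choose k + (d - m).choose k) *
          (((d + 1) / 2).choose j + (d - (d + 1) / 2).choose j) ≤
        (((d + 1) / 2).choose k + (d - (d + 1) / 2).choose k) *
          (m.choose j + (d - m).choose j) := by
  intro j hkj
  induction j, hkj using Nat.le_induction with
  | base => intro _; apply le_of_eq; ring
  | succ j hkj ih =>
    intro hjd
    have ih' := ih (by omega)
    have M := chain_m d j (by omega) (by omega) m hm hmd
    have hDm : 0 < m.choose j + (d - m).choose j :=
      Nat.add_pos_left (Nat.choose_pos (by omega)) _
    have hDc : 0 < ((d + 1) / 2).choose j + (d - (d + 1) / 2).choose j :=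
      Nat.add_pos_left (Nat.choose_pos (by omega)) _
    have key := Nat.mul_le_mul ih' M
    have hpos : 0 < (m.choose j + (d - m).choose j) *
        (((d + 1) / 2).choose j + (d - (d + 1) / 2).choose j) := Nat.mul_pos hDm hDc
    apply Nat.le_of_mul_le_mul_right _ hpos
    calc (m.choose k + (d - m).choose k) *
          (((d + 1) / 2).choose (j + 1) + (d - (d + 1) / 2).choose (j + 1)) *
          ((m.choose j + (d - m).choose j) *
            (((d + 1) / 2).choose j + (d - (d + 1) / 2).choose j))
        = (m.choose k + (d - m).choose k) *
            (((d + 1) / 2).choose j + (d - (d + 1) / 2).choose j) *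
            ((m.choose j + (d - m).choose j) *
              (((d + 1) / 2).choose (j + 1) + (d - (d + 1) / 2).choose (j + 1))) := by ring
      _ ≤ (((d + 1) / 2).choose k + (d - (d + 1) / 2).choose k) *
            (m.choose j + (d - m).choose j) *
            ((((d + 1) / 2).choose j + (d - (d + 1) / 2).choose j) *
              (m.choose (j + 1) + (d - m).choose (j + 1))) := key
      _ = (((d + 1) / 2).choose k + (d - (d + 1) / 2).choose k) *
            (m.choose (j + 1) + (d - m).choose (j + 1)) *
            ((m.choose j + (d - m).choose j) *
              (((d + 1) / 2).choose j + (d - (d + 1) / 2).choose j)) := by ring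

/-- For integers `1 ≤ k < l ≤ d/2` and `d/2 ≤ m ≤ d`, the ratio
`(C(m,k)+C(d-m,k)) / (C(m,l)+C(d-m,l))` is at most
`(C(⌊d/2⌋,k)+C(⌈d/2⌉,k)) / (C(⌊d/2⌋,l)+C(⌈d/2⌉,l))`. -/
theorem binom_ratio_max_at_middle (d k l m : ℕ) (hd : 2 ≤ d)
    (hk : 1 ≤ k) (hkl : k < l) (hl : 2 * l ≤ d)
    (hm : d ≤ 2 * m) (hmd : m ≤ d) :
    ((m.choose k : ℝ) + ((d - m).choose k : ℝ)) /
        ((m.choose l : ℝ) + ((d - m).choose l : ℝ)) ≤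
      (((d / 2).choose k : ℝ) + (((d + 1) / 2).choose k : ℝ)) /
        (((d / 2).choose l : ℝ) + (((d + 1) / 2).choose l : ℝ)) := by
  have hc : d - (d + 1) / 2 = d / 2 := by omega
  have Q := chain_j d k m hk (by omega) hmd l (le_of_lt hkl) hl
  rw [hc] at Q
  have hpos1 : (0 : ℝ) < (m.choose l : ℝ) + ((d - m).choose l : ℝ) := by
    have : 0 < m.choose l := Nat.choose_pos (by omega)
    positivity
  have hpos2 : (0 : ℝ) < ((d / 2).choose l : ℝ) + (((d + 1) / 2).choose l : ℝ) := by
    have : 0 < (d / 2).choose l := Nat.choose_pos (by omega)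
    positivity
  rw [div_le_div_iff₀ hpos1 hpos2]
  have QR : ((m.choose k + (d - m).choose k) *
      (((d + 1) / 2).choose l + (d / 2).choose l) : ℝ) ≤
      ((((d + 1) / 2).choose k + (d / 2).choose k) *
      (m.choose l + (d - m).choose l) : ℝ) := by exact_mod_cast Q
  nlinarith [QR]
end

section
/- Let P and Q be homogeneous polynomials on a finite-dimensional real vector space. There exists a constant-coefficient differential operator \beta with P = \beta Q if and only if every constant-coefficient differential operator \alpha annihilating Q also annihilates P. -/
open MvPolynomial

noncomputable section

/-- The iterated partial-derivative operator `∂^s` associated to a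
multi-index `s`. -/
def pdMulti (n : ℕ) (s : Fin n →₀ ℕ) :
    Module.End ℝ (MvPolynomial (Fin n) ℝ) :=
  (List.ofFn fun i : Fin n =>
    ((pderiv i : Derivation ℝ (MvPolynomial (Fin n) ℝ)
      (MvPolynomial (Fin n) ℝ)).toLinearMap) ^ (s i)).prod

/-- A polynomial `α = ∑ c_s x^s` acting on a polynomial `Q` as the
constant-coefficient differential operator `∑ c_s ∂^s`. -/
def diffAct (n : ℕ) (α Q : MvPolynomial (Fin n) ℝ) : MvPolynomial (Fin n) ℝ :=
  (AddMonoidAlgebra.coeff α).sum fun s c => c • (pdMulti n s Q)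

namespace DiffopProof

variable {n : ℕ}

/-- `∂_i` as a linear endomorphism. -/
def pd (i : Fin n) : Module.End ℝ (MvPolynomial (Fin n) ℝ) :=
  (pderiv i : Derivation ℝ (MvPolynomial (Fin n) ℝ) (MvPolynomial (Fin n) ℝ)).toLinearMap

lemma pd_apply (i : Fin n) (f : MvPolynomial (Fin n) ℝ) : pd i f = pderiv i f := rfl

lemma pd_monomial (i : Fin n) (t : Fin n →₀ ℕ) (c : ℝ) :
    pd i (monomial t c) = monomial (t - Finsupp.single i 1) (c * t i) := by
  simp [pd_apply, pderiv_monomial]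

lemma aux_desc (m a : ℕ) : (m : ℝ) * ((m - 1).descFactorial a : ℝ) = (m.descFactorial (a+1) : ℝ) := by
  cases m with
  | zero => simp
  | succ m => rw [Nat.succ_descFactorial_succ]; push_cast; ring

lemma pd_pow_monomial (i : Fin n) (a : ℕ) (t : Fin n →₀ ℕ) (c : ℝ) :
    (pd i ^ a) (monomial t c)
      = monomial (t - Finsupp.single i a) (c * ((t i).descFactorial a)) := by
  induction a generalizing t c with
  | zero => simp
  | succ a ih =>
      rw [pow_succ, Module.End.mul_apply, pd_monomial, ih]
      congr 1
      · rw [tsub_tsub, ← Finsupp.single_add, add_comm]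
      · rw [Finsupp.tsub_apply, Finsupp.single_eq_same]
        have := aux_desc (t i) a
        push_cast at this ⊢
        rw [mul_assoc, this]

end DiffopProof

namespace DiffopProof

variable {n : ℕ}

lemma pd_commute (i j : Fin n) : Commute (pd i) (pd j) := by
  rcases eq_or_ne i j with rfl | h
  · rfl
  · apply LinearMap.ext
    intro f
    induction f using MvPolynomial.induction_on' with
    | monomial t c =>
        rw [Module.End.mul_apply, Module.End.mul_apply, pd_monomial, pd_monomial,
          pd_monomial, pd_monomial]
        congr 1
        · rw [tsub_tsub, tsub_tsub, add_comm]
        · rw [Finsupp.tsub_apply, Finsupp.tsub_apply,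
            Finsupp.single_eq_of_ne h, Finsupp.single_eq_of_ne (Ne.symm h)]
          simp only [Nat.sub_zero]
          ring
    | add f g hf hg =>
        rw [Module.End.mul_apply, Module.End.mul_apply] at *
        rw [map_add, map_add, map_add, map_add, hf, hg]

lemma pd_pow_commute (i j : Fin n) (a b : ℕ) : Commute (pd i ^ a) (pd j ^ b) :=
  (pd_commute i j).pow_pow a b

lemma pdMulti_eq (s : Fin n →₀ ℕ) :
    pdMulti n s = Finset.univ.noncommProd (fun i => pd i ^ s i)
      (fun i _ j _ _ => pd_pow_commute i j (s i) (s j)) := by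
  have hcongr : ∀ (m₁ m₂ : Multiset (Module.End ℝ (MvPolynomial (Fin n) ℝ)))
      (h₁ : Set.Pairwise {x | x ∈ m₁} Commute) (h₂ : Set.Pairwise {x | x ∈ m₂} Commute),
      m₁ = m₂ → m₁.noncommProd h₁ = m₂.noncommProd h₂ := by
    rintro m₁ m₂ h₁ h₂ rfl; rfl
  have hcomm : Set.Pairwise {x | x ∈ ((List.ofFn fun i => pd i ^ s i) : Multiset (Module.End ℝ (MvPolynomial (Fin n) ℝ)))} Commute := by
    intro x hx y hy _
    simp only [Multiset.mem_coe, List.mem_ofFn, Set.mem_setOf_eq] at hx hy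
    obtain ⟨i, rfl⟩ := hx
    obtain ⟨j, rfl⟩ := hy
    exact pd_pow_commute i j _ _
  calc pdMulti n s
      = ((List.ofFn fun i => pd i ^ s i) : Multiset (Module.End ℝ (MvPolynomial (Fin n) ℝ))).noncommProd hcomm :=
        (Multiset.noncommProd_coe _ _).symm
    _ = (Finset.univ.val.map fun i => pd i ^ s i).noncommProd _ :=
        hcongr _ _ _ _ (Fin.univ_val_map _).symm
    _ = Finset.univ.noncommProd (fun i => pd i ^ s i) _ := rfl

lemma pdMulti_add (s t : Fin n →₀ ℕ) :
    pdMulti n (s + t) = pdMulti n s * pdMulti n t := by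
  rw [pdMulti_eq, pdMulti_eq, pdMulti_eq,
    ← Finset.noncommProd_mul_distrib _ _
      (fun i _ j _ _ => pd_pow_commute i j (s i) (s j))
      (fun i _ j _ _ => pd_pow_commute i j (t i) (t j))
      (fun i _ j _ _ => pd_pow_commute i j (t i) (s j))]
  apply Finset.noncommProd_congr rfl
  intro i _
  simp [pow_add]

lemma pdMulti_zero : pdMulti n 0 = 1 := by
  rw [pdMulti_eq]
  apply Finset.noncommProd_eq_pow_card _ _ _ 1 (fun i _ => by simp) |>.trans (one_pow _)

lemma pdMulti_comm (s t : Fin n →₀ ℕ) :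
    pdMulti n s * pdMulti n t = pdMulti n t * pdMulti n s := by
  rw [← pdMulti_add, ← pdMulti_add, add_comm]

end DiffopProof

namespace DiffopProof

variable {n : ℕ}

lemma pdMulti_single (j : Fin n) (a : ℕ) : pdMulti n (Finsupp.single j a) = pd j ^ a := by
  classical
  rw [pdMulti_eq]
  refine (Finset.noncommProd_congr (Finset.insert_erase (Finset.mem_univ j)).symm
    (f := fun i => pd i ^ (Finsupp.single j a) i)
    (fun x _ => rfl) _).trans ?_
  refine (Finset.noncommProd_insert_of_notMem _ _ _ _ (Finset.notMem_erase j _)).trans ?_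
  simp only [Finsupp.single_eq_same]
  have : (Finset.univ.erase j).noncommProd (fun i => pd i ^ (Finsupp.single j a) i)
      (fun i _ k _ h => pd_pow_commute i k _ _) = 1 := by
    refine (Finset.noncommProd_eq_pow_card _ _ _ 1 ?_).trans (one_pow _)
    intro i hi
    rw [Finsupp.single_eq_of_ne (Finset.ne_of_mem_erase hi), pow_zero]
  simp only [this, mul_one]

lemma pdMulti_monomial (s t : Fin n →₀ ℕ) (c : ℝ) :
    pdMulti n s (monomial t c)
      = monomial (t - s) (c * (∏ i, (t i).descFactorial (s i) : ℕ)) := by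
  classical
  induction s using Finsupp.induction generalizing t c with
  | zero => simp [pdMulti_zero]
  | single_add j a f hjf ha ih =>
      rw [pdMulti_add, Module.End.mul_apply, ih, pdMulti_single, pd_pow_monomial]
      have hfj : f j = 0 := Finsupp.notMem_support_iff.mp hjf
      congr 1
      · rw [tsub_tsub, add_comm]
      · rw [Finsupp.tsub_apply, hfj, Nat.sub_zero]
        rw [Finset.prod_eq_mul_prod_sdiff_singleton_of_mem (Finset.mem_univ j)
            (fun i => (t i).descFactorial (f i)),
          Finset.prod_eq_mul_prod_sdiff_singleton_of_mem (Finset.mem_univ j)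
            (fun i => (t i).descFactorial ((Finsupp.single j a + f) i))]
        have h1 : (Finsupp.single j a + f) j = a := by
          rw [Finsupp.add_apply, Finsupp.single_eq_same, hfj, add_zero]
        have h2 : ∀ i ∈ Finset.univ \ {j},
            (t i).descFactorial ((Finsupp.single j a + f) i)
              = (t i).descFactorial (f i) := by
          intro i hi
          rw [Finsupp.add_apply, Finsupp.single_eq_of_ne
            (fun hji => by simp [hji.symm] at hi), zero_add]
        rw [h1, Finset.prod_congr rfl h2, hfj, Nat.descFactorial_zero]
        push_cast
        ring

end DiffopProof

namespace DiffopProof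
variable {n : ℕ}

/-- The operator associated to a polynomial, as a linear map. -/
def opOfL : MvPolynomial (Fin n) ℝ →ₗ[ℝ] Module.End ℝ (MvPolynomial (Fin n) ℝ) :=
  (Finsupp.lsum ℝ fun s => LinearMap.toSpanSingleton ℝ _ (pdMulti n s)) ∘ₗ
    (AddMonoidAlgebra.coeffLinearEquiv ℝ).toLinearMap

def opOf (α : MvPolynomial (Fin n) ℝ) : Module.End ℝ (MvPolynomial (Fin n) ℝ) :=
  opOfL α

lemma opOf_def (α : MvPolynomial (Fin n) ℝ) :
    opOf α = (AddMonoidAlgebra.coeff α).sum fun s c => c • pdMulti n s := by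
  simp [opOf, opOfL, Finsupp.lsum_apply, LinearMap.toSpanSingleton_apply]
  rfl

lemma diffAct_eq (α Q : MvPolynomial (Fin n) ℝ) : diffAct n α Q = opOf α Q := by
  rw [opOf_def]
  simp [diffAct, Finsupp.sum, LinearMap.sum_apply, LinearMap.smul_apply]

lemma opOf_apply (α Q : MvPolynomial (Fin n) ℝ) :
    opOf α Q = (AddMonoidAlgebra.coeff α).sum fun s c => c • pdMulti n s Q := by
  rw [← diffAct_eq]; rfl

lemma pdMulti_commute (s t : Fin n →₀ ℕ) : Commute (pdMulti n s) (pdMulti n t) :=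
  pdMulti_comm s t

lemma opOf_commute (α β : MvPolynomial (Fin n) ℝ) : Commute (opOf α) (opOf β) := by
  rw [opOf_def, opOf_def, Finsupp.sum, Finsupp.sum]
  apply Commute.sum_left
  intro s hs
  apply Commute.sum_right
  intro t ht
  have hgen : ∀ (c d : ℝ) (x y : Module.End ℝ (MvPolynomial (Fin n) ℝ)),
      Commute x y → Commute (c • x) (d • y) :=
    fun c d x y h => (h.smul_left c).smul_right d
  exact hgen _ _ _ _ (pdMulti_commute _ _)

lemma opOf_swap (α β Q : MvPolynomial (Fin n) ℝ) :
    opOf α (opOf β Q) = opOf β (opOf α Q) := by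
  have h := opOf_commute α β
  calc opOf α (opOf β Q) = (opOf α * opOf β) Q := rfl
    _ = (opOf β * opOf α) Q := by rw [h]
    _ = opOf β (opOf α Q) := rfl

lemma constantCoeff_opOf_monomial (α : MvPolynomial (Fin n) ℝ) (t : Fin n →₀ ℕ) (d : ℝ) :
    constantCoeff (opOf α (monomial t d))
      = coeff t α * d * (∏ i, (t i).factorial : ℕ) := by
  classical
  rw [opOf_apply, map_finsuppSum]
  rw [Finsupp.sum_congr
    (g2 := fun s c => if s = t then c * d * ((∏ i, (t i).factorial : ℕ) : ℝ) else 0) ?_]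
  · rw [Finsupp.sum, Finset.sum_eq_single t (fun b _ hb => if_neg hb)
      (fun ht => by rw [if_pos rfl, Finsupp.notMem_support_iff.mp ht]; ring), if_pos rfl]
    rfl
  · intro s _
    rw [pdMulti_monomial, smul_monomial, constantCoeff_monomial]
    rcases eq_or_ne s t with rfl | hst
    · rw [if_pos (tsub_self s), if_pos rfl]
      simp only [Nat.descFactorial_self, smul_eq_mul]
      ring
    · rw [if_neg hst]
      by_cases hle : t ≤ s
      · rw [if_pos (tsub_eq_zero_of_le hle)]
        obtain ⟨i, hi⟩ : ∃ i, t i < s i := by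
          by_contra hcon
          push_neg at hcon
          exact hst (Finsupp.ext fun i => le_antisymm (hcon i) (Finsupp.le_def.mp hle i))
        rw [Finset.prod_eq_zero (Finset.mem_univ i) (Nat.descFactorial_of_lt hi)]
        simp
      · rw [if_neg (fun h0 => hle (tsub_eq_zero_iff_le.mp h0))]

end DiffopProof

namespace DiffopProof
variable {n : ℕ}

lemma opOf_zero : opOf (0 : MvPolynomial (Fin n) ℝ) = 0 := map_zero (opOfL (n := n))

lemma opOf_add (α β : MvPolynomial (Fin n) ℝ) : opOf (α + β) = opOf α + opOf β :=
  map_add (opOfL (n := n)) α β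

lemma opOf_smulp (r : ℝ) (α : MvPolynomial (Fin n) ℝ) : opOf (r • α) = r • opOf α :=
  map_smul (opOfL (n := n)) r α

lemma eq_zero_of_constantCoeff_opOf_self (α : MvPolynomial (Fin n) ℝ)
    (h : constantCoeff (opOf α α) = 0) : α = 0 := by
  classical
  have h1 : constantCoeff (opOf α α)
      = ∑ t ∈ α.support, coeff t α * coeff t α * (∏ i, (t i).factorial : ℕ) := by
    conv_lhs => rw [show opOf α α = opOf α (∑ t ∈ α.support, monomial t (coeff t α)) from
      congrArg (opOf α) (as_sum α)]
    rw [map_sum, map_sum]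
    exact Finset.sum_congr rfl fun t _ => constantCoeff_opOf_monomial α t (coeff t α)
  rw [h1] at h
  have hterm : ∀ t ∈ α.support, coeff t α * coeff t α * (∏ i, (t i).factorial : ℕ) = 0 :=
    (Finset.sum_eq_zero_iff_of_nonneg (fun t _ => mul_nonneg (mul_self_nonneg _) (Nat.cast_nonneg _))).mp h
  ext u
  simp only [coeff_zero]
  by_cases hu : u ∈ α.support
  · have := hterm u hu
    have hf : (0:ℝ) < ((∏ i, (u i).factorial : ℕ) : ℝ) := by positivity
    have := mul_eq_zero.mp this
    rcases this with h2 | h2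
    · exact (mul_self_eq_zero).mp h2
    · exact absurd h2 (ne_of_gt hf)
  · exact MvPolynomial.notMem_support_iff.mp hu

lemma degree_add' (a b : Fin n →₀ ℕ) :
    (a + b).degree = a.degree + b.degree := by
  simp [Finsupp.degree_eq_weight_one, map_add]

lemma degree_of_mem_support {Q : MvPolynomial (Fin n) ℝ} {q : ℕ}
    (hQ : Q.IsHomogeneous q) {t : Fin n →₀ ℕ} (ht : t ∈ Q.support) :
    t.degree = q := by
  rw [Finsupp.degree_eq_weight_one]
  exact hQ (MvPolynomial.mem_support_iff.mp ht)

lemma pdMulti_monomial_isHomogeneous (s t : Fin n →₀ ℕ) (c : ℝ) (m q : ℕ)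
    (hs : s.degree = m) (ht : t.degree = q) :
    (pdMulti n s (monomial t c)).IsHomogeneous (q - m) := by
  rw [pdMulti_monomial]
  by_cases hle : s ≤ t
  · apply isHomogeneous_monomial
    have hadd : (t - s) + s = t := tsub_add_cancel_of_le hle
    have := degree_add' (t - s) s
    rw [hadd] at this
    omega
  · obtain ⟨i, hi⟩ : ∃ i, t i < s i := by
      by_contra hcon
      push_neg at hcon
      exact hle (Finsupp.le_def.mpr fun i => hcon i)
    rw [Finset.prod_eq_zero (Finset.mem_univ i) (Nat.descFactorial_of_lt hi)]
    rw [Nat.cast_zero, mul_zero, monomial_zero]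
    exact isHomogeneous_zero _ _ _

lemma pdMulti_monomial_eq_zero (s t : Fin n →₀ ℕ) (c : ℝ)
    (h : t.degree < s.degree) : pdMulti n s (monomial t c) = 0 := by
  rw [pdMulti_monomial]
  obtain ⟨i, hi⟩ : ∃ i, t i < s i := by
    by_contra hcon
    push_neg at hcon
    have hle : s ≤ t := Finsupp.le_def.mpr fun i => hcon i
    have hadd : (t - s) + s = t := tsub_add_cancel_of_le hle
    have := degree_add' (t - s) s
    rw [hadd] at this
    omega
  rw [Finset.prod_eq_zero (Finset.mem_univ i) (Nat.descFactorial_of_lt hi)]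
  rw [Nat.cast_zero, mul_zero, monomial_zero]

lemma pdMulti_isHomogeneous {Q : MvPolynomial (Fin n) ℝ} {q : ℕ}
    (hQ : Q.IsHomogeneous q) (s : Fin n →₀ ℕ) (m : ℕ) (hs : s.degree = m) :
    (pdMulti n s Q).IsHomogeneous (q - m) := by
  conv_lhs => rw [as_sum Q]
  rw [map_sum]
  apply IsHomogeneous.sum
  intro t ht
  exact pdMulti_monomial_isHomogeneous s t _ m q hs (degree_of_mem_support hQ ht)

lemma pdMulti_eq_zero {Q : MvPolynomial (Fin n) ℝ} {q : ℕ}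
    (hQ : Q.IsHomogeneous q) (s : Fin n →₀ ℕ) (h : q < s.degree) :
    pdMulti n s Q = 0 := by
  conv_lhs => rw [as_sum Q]
  rw [map_sum]
  apply Finset.sum_eq_zero
  intro t ht
  exact pdMulti_monomial_eq_zero s t _ (by rw [degree_of_mem_support hQ ht]; exact h)

lemma opOf_isHomogeneous {β Q : MvPolynomial (Fin n) ℝ} {m q : ℕ}
    (hβ : β.IsHomogeneous m) (hQ : Q.IsHomogeneous q) :
    (opOf β Q).IsHomogeneous (q - m) := by
  rw [opOf_apply, Finsupp.sum]
  apply IsHomogeneous.sum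
  intro s hs
  have hd : s.degree = m := by
    rw [Finsupp.degree_eq_weight_one]
    exact hβ (MvPolynomial.mem_support_iff.mp (by exact hs))
  exact (homogeneousSubmodule (Fin n) ℝ (q - m)).smul_mem _
    (pdMulti_isHomogeneous hQ s m hd)

lemma opOf_eq_zero_of_lt {β Q : MvPolynomial (Fin n) ℝ} {m q : ℕ}
    (hβ : β.IsHomogeneous m) (hQ : Q.IsHomogeneous q) (h : q < m) :
    opOf β Q = 0 := by
  rw [opOf_apply, Finsupp.sum]
  apply Finset.sum_eq_zero
  intro s hs
  have hd : s.degree = m := by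
    rw [Finsupp.degree_eq_weight_one]
    exact hβ (MvPolynomial.mem_support_iff.mp (by exact hs))
  rw [pdMulti_eq_zero hQ s (by omega), smul_zero]

end DiffopProof

open DiffopProof in
/-- Lemma `reldiff`: for homogeneous polynomials `P`, `Q`, there is a
constant-coefficient differential operator `β` with `β ⬝ Q = P` iff every
constant-coefficient differential operator annihilating `Q` annihilates `P`. -/
theorem exists_diffop_iff (n p q : ℕ) (P Q : MvPolynomial (Fin n) ℝ)
    (hP : P.IsHomogeneous p) (hQ : Q.IsHomogeneous q) :
    (∃ β : MvPolynomial (Fin n) ℝ, diffAct n β Q = P) ↔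
      (∀ α : MvPolynomial (Fin n) ℝ, diffAct n α Q = 0 → diffAct n α P = 0) := by
  constructor
  · rintro ⟨β, rfl⟩ α hα
    rw [diffAct_eq] at hα ⊢
    rw [diffAct_eq, opOf_swap, hα, map_zero]
  · intro H
    rcases le_or_gt p q with hpq | hqp
    · -- the main case `p ≤ q`
      set d := q - p with hd
      set W := homogeneousSubmodule (Fin n) ℝ p with hW
      have hWle : W ≤ restrictTotalDegree (Fin n) ℝ p := by
        intro x hx
        rw [mem_restrictTotalDegree]
        exact IsHomogeneous.totalDegree_le hx
      haveI : FiniteDimensional ℝ W := Submodule.finiteDimensional_of_le hWle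
      -- the apolar pairing on `W`
      let Φ : W →ₗ[ℝ] Module.Dual ℝ W :=
        { toFun := fun w =>
            { toFun := fun v => constantCoeff (opOf (w : MvPolynomial (Fin n) ℝ) (v : MvPolynomial (Fin n) ℝ))
              map_add' := fun v₁ v₂ => by
                simp [Submodule.coe_add, map_add]
              map_smul' := fun r v => by
                simp only [SetLike.val_smul, map_smul, RingHom.id_apply]
                exact coeff_smul _ _ _ }
          map_add' := fun w₁ w₂ => by
            ext v
            simp [opOf_add]
          map_smul' := fun r w => by
            ext v
            simp only [SetLike.val_smul, RingHom.id_apply, LinearMap.coe_mk, AddHom.coe_mk,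
              LinearMap.smul_apply]
            rw [opOf_smulp, LinearMap.smul_apply]
            exact coeff_smul _ _ _ }
      have hΦinj : Function.Injective Φ := by
        intro w₁ w₂ hww
        have h0 : Φ (w₁ - w₂) = 0 := by rw [map_sub, hww, sub_self]
        have : (w₁ - w₂ : W) = 0 := by
          have h00 : constantCoeff (opOf ((w₁ - w₂ : W) : MvPolynomial (Fin n) ℝ)
              ((w₁ - w₂ : W) : MvPolynomial (Fin n) ℝ)) = 0 :=
            LinearMap.congr_fun h0 (w₁ - w₂)
          have := eq_zero_of_constantCoeff_opOf_self _ h00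
          exact Subtype.ext this
        exact sub_eq_zero.mp this
      have hΦsurj : Function.Surjective Φ :=
        (LinearMap.injective_iff_surjective_of_finrank_eq_finrank
          (Subspace.dual_finrank_eq).symm).mp hΦinj
      -- the subspace of `W` of polynomials of the form `opOf β Q`
      let LQ : MvPolynomial (Fin n) ℝ →ₗ[ℝ] MvPolynomial (Fin n) ℝ :=
        { toFun := fun β => opOf β Q
          map_add' := fun β₁ β₂ => by rw [opOf_add]; rfl
          map_smul' := fun r β => by rw [opOf_smulp]; rfl }
      set V := homogeneousSubmodule (Fin n) ℝ d with hV
      have hU₀W : Submodule.map LQ V ≤ W := by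
        rintro _ ⟨β, hβ, rfl⟩
        have := opOf_isHomogeneous (m := d) hβ hQ
        rw [show q - d = p by omega] at this
        exact this
      set U : Submodule ℝ W := (Submodule.map LQ V).comap W.subtype with hU
      by_cases hPU : (⟨P, hP⟩ : W) ∈ U
      · obtain ⟨β, hβV, hβeq⟩ := hPU
        exact ⟨β, by rw [diffAct_eq]; exact hβeq⟩
      · exfalso
        set x : W ⧸ U := Submodule.Quotient.mk (⟨P, hP⟩ : W) with hx
        have hxne : x ≠ 0 := by
          rw [hx, ne_eq, Submodule.Quotient.mk_eq_zero]
          exact hPU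
        obtain ⟨ψ, hψ⟩ : ∃ ψ : Module.Dual ℝ (W ⧸ U), ψ x ≠ 0 := by
          by_contra hcon
          push_neg at hcon
          exact hxne ((Module.forall_dual_apply_eq_zero_iff ℝ x).mp hcon)
        obtain ⟨w, hw⟩ := hΦsurj (ψ.comp U.mkQ)
        have hker : ∀ β : MvPolynomial (Fin n) ℝ, β.IsHomogeneous d →
            constantCoeff (opOf (w : MvPolynomial (Fin n) ℝ) (opOf β Q)) = 0 := by
          intro β hβ
          have hmemW : opOf β Q ∈ W := hU₀W ⟨β, hβ, rfl⟩
          have hmemU : (⟨opOf β Q, hmemW⟩ : W) ∈ U := ⟨β, hβ, rfl⟩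
          have : Φ w ⟨opOf β Q, hmemW⟩ = 0 := by
            rw [hw]
            simp only [LinearMap.comp_apply, Submodule.mkQ_apply]
            rw [(Submodule.Quotient.mk_eq_zero U).mpr hmemU, map_zero]
          exact this
        have hγ : opOf (w : MvPolynomial (Fin n) ℝ) Q = 0 := by
          set γ := opOf (w : MvPolynomial (Fin n) ℝ) Q with hγdef
          have hγhom : γ.IsHomogeneous d := by
            have := opOf_isHomogeneous (m := p) w.2 hQ
            rwa [← hd] at this
          apply eq_zero_of_constantCoeff_opOf_self
          rw [hγdef, opOf_swap]
          exact hker γ hγhom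
        have hP0 : constantCoeff (opOf (w : MvPolynomial (Fin n) ℝ) P) = 0 := by
          have hH := H w (by rw [diffAct_eq]; exact hγ)
          rw [diffAct_eq] at hH
          rw [hH, map_zero]
        apply hψ
        have h1 : Φ w ⟨P, hP⟩ = 0 := hP0
        rw [hw] at h1
        simpa using h1
    · -- the degenerate case `q < p`: `P` must be zero
      have hPQ : opOf P Q = 0 := opOf_eq_zero_of_lt hP hQ hqp
      have h0 := H P (by rw [diffAct_eq]; exact hPQ)
      rw [diffAct_eq] at h0
      have hP0 : P = 0 := eq_zero_of_constantCoeff_opOf_self P (by rw [h0, map_zero])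
      exact ⟨0, by rw [diffAct_eq, opOf_zero, hP0]; rfl⟩
end
end

section
/- For a simplicial complete fan dual to a simple polytope, the algebra of continuous piecewise polynomial functions modulo the ideal generated by globally linear functions is isomorphic to the polytope algebra A(\Sigma) = Diff/J, and the isomorphism sends the support function S_\Sigma to the Lefschetz element L_\Sigma. -/
open MvPolynomial Matrix Finset

noncomputable section

set_option linter.unusedSectionVars false

namespace PWAux

variable {σ : Type} [DecidableEq σ]

/-- dot product of a finite sum -/
theorem sum_dot {α : Type} [Fintype α] {β : Type} (s : Finset β) (f : β → α → ℝ) (w : α → ℝ) :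
    (∑ i ∈ s, f i) ⬝ᵥ w = ∑ i ∈ s, f i ⬝ᵥ w := by
  simp only [dotProduct, Finset.sum_apply, Finset.sum_mul]
  exact Finset.sum_comm

theorem dot_sum {α : Type} [Fintype α] {β : Type} (s : Finset β) (w : α → ℝ) (f : β → α → ℝ) :
    w ⬝ᵥ (∑ i ∈ s, f i) = ∑ i ∈ s, w ⬝ᵥ f i := by
  simp only [dotProduct, Finset.sum_apply, Finset.mul_sum]
  exact Finset.sum_comm

theorem dot_smul' (c : ℝ) {α : Type} [Fintype α] (w v : α → ℝ) :
    w ⬝ᵥ (c • v) = c * (w ⬝ᵥ v) := by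
  simp [dotProduct, Finset.mul_sum]; ring_nf; simp [mul_comm, mul_assoc, mul_left_comm]

/-- product of variables over a finset as a monomial -/
theorem prod_X_eq_monomial (F : Finset σ) :
    (∏ G ∈ F, X G : MvPolynomial σ ℝ) = monomial (∑ G ∈ F, Finsupp.single G 1) 1 := by
  classical
  induction F using Finset.induction_on with
  | empty => simp [monomial_eq]
  | insert a s h ih =>
      rw [Finset.prod_insert h, Finset.sum_insert h, ih, X, monomial_mul, one_mul]

/-- restriction of a polynomial to variables in `T` (others set to `0`) -/
def resP (T : Finset σ) (p : MvPolynomial σ ℝ) : MvPolynomial σ ℝ :=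
  bind₁ (fun i => if i ∈ T then X i else 0) p

theorem eval_bind₁' {τ : Type} (f : τ → ℝ) (g : σ → MvPolynomial τ ℝ) (p : MvPolynomial σ ℝ) :
    eval f (bind₁ g p) = eval (fun i => eval f (g i)) p :=
  eval₂Hom_bind₁ (RingHom.id ℝ) f g p

theorem eval_resP (T : Finset σ) (p : MvPolynomial σ ℝ) (t : σ → ℝ) :
    eval t (resP T p) = eval (fun i => if i ∈ T then t i else 0) p := by
  rw [resP, eval_bind₁']
  have hfun : (fun i => eval t (if i ∈ T then X i else 0)) = fun i => if i ∈ T then t i else 0 := by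
    funext i
    by_cases h : i ∈ T <;> simp [h]
  rw [hfun]

theorem resP_monomial (T : Finset σ) (m : σ →₀ ℕ) (c : ℝ) :
    resP T (monomial m c) = if m.support ⊆ T then monomial m c else 0 := by
  rw [resP, bind₁_monomial]
  by_cases h : (m.support : Finset σ) ⊆ T
  · rw [if_pos h]
    rw [monomial_eq]
    congr 1
    apply Finset.prod_congr rfl
    intro i hi
    rw [if_pos (h hi)]
  · rw [if_neg h]
    obtain ⟨i, hiS, hiT⟩ := Finset.not_subset.mp h
    rw [Finset.prod_eq_zero hiS, mul_zero]
    rw [if_neg hiT]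
    exact zero_pow (Finsupp.mem_support_iff.mp hiS)

theorem coeff_resP (T : Finset σ) (p : MvPolynomial σ ℝ) (m : σ →₀ ℕ) :
    coeff m (resP T p) = if m.support ⊆ T then coeff m p else 0 := by
  classical
  conv_lhs => rw [p.as_sum]
  rw [resP, map_sum]
  have hcongr : ∀ m' ∈ p.support,
      (bind₁ fun i => if i ∈ T then X i else 0) ((monomial m') (coeff m' p)) =
      if m'.support ⊆ T then monomial m' (coeff m' p) else 0 :=
    fun m' _ => resP_monomial T m' (coeff m' p)
  rw [Finset.sum_congr rfl hcongr]
  rw [coeff_sum]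
  simp only [apply_ite (coeff m), coeff_monomial, coeff_zero]
  by_cases h : m.support ⊆ T
  · rw [if_pos h]
    by_cases hm : m ∈ p.support
    · rw [Finset.sum_eq_single m]
      · simp [h]
      · intro b _ hb
        by_cases hbT : b.support ⊆ T <;> simp [hbT, hb]
      · intro hmn
        simp [MvPolynomial.notMem_support_iff.mp hmn]
    · rw [Finset.sum_eq_zero, (MvPolynomial.notMem_support_iff.mp hm)]
      intro b hb
      have hbm : b ≠ m := fun e => hm (e ▸ hb)
      by_cases hbT : b.support ⊆ T <;> simp [hbT, hbm]
  · rw [if_neg h]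
    apply Finset.sum_eq_zero
    intro b hb
    by_cases hbT : b.support ⊆ T
    · rw [if_pos hbT, if_neg]
      intro e; exact h (e ▸ hbT)
    · simp [hbT]

/-- the part of `p` consisting of monomials with support exactly `F` -/
def exaP (F : Finset σ) (p : MvPolynomial σ ℝ) : MvPolynomial σ ℝ :=
  ∑ m ∈ p.support.filter (fun m => m.support = F), monomial m (coeff m p)

theorem coeff_exaP (F : Finset σ) (p : MvPolynomial σ ℝ) (m : σ →₀ ℕ) :
    coeff m (exaP F p) = if m.support = F then coeff m p else 0 := by
  classical
  rw [exaP, coeff_sum]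
  simp only [coeff_monomial]
  by_cases h : m.support = F
  · rw [if_pos h]
    by_cases hm : m ∈ p.support
    · rw [Finset.sum_eq_single m]
      · simp
      · intro b _ hb; simp [hb]
      · intro hmn; exact absurd (Finset.mem_filter.mpr ⟨hm, h⟩) hmn
    · rw [Finset.sum_eq_zero, (MvPolynomial.notMem_support_iff.mp hm)]
      intro b hb
      have : b ≠ m := fun e => hm (e ▸ (Finset.mem_filter.mp hb).1)
      simp [this]
  · rw [if_neg h]
    apply Finset.sum_eq_zero
    intro b hb
    have hbF := (Finset.mem_filter.mp hb).2
    have : b ≠ m := fun e => h (e ▸ hbF)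
    simp [this]

theorem exaP_resP {F T : Finset σ} (hFT : F ⊆ T) (p : MvPolynomial σ ℝ) :
    exaP F (resP T p) = exaP F p := by
  apply MvPolynomial.ext
  intro m
  rw [coeff_exaP, coeff_exaP, coeff_resP]
  by_cases h : m.support = F
  · rw [if_pos h, if_pos h, if_pos (h ▸ hFT)]
  · rw [if_neg h, if_neg h]

theorem resP_eq_sum_exaP (T : Finset σ) (p : MvPolynomial σ ℝ) :
    resP T p = ∑ F ∈ T.powerset, exaP F p := by
  classical
  apply MvPolynomial.ext
  intro m
  rw [coeff_resP, coeff_sum]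
  simp only [coeff_exaP]
  rw [Finset.sum_ite_eq T.powerset m.support (fun _ => coeff m p)]
  simp [Finset.mem_powerset]

theorem eval_exaP_eq_zero {F : Finset σ} {t : σ → ℝ} {G : σ} (hG : G ∈ F) (ht : t G = 0)
    (p : MvPolynomial σ ℝ) : eval t (exaP F p) = 0 := by
  rw [exaP, map_sum]
  apply Finset.sum_eq_zero
  intro m hm
  have hmF := (Finset.mem_filter.mp hm).2
  rw [eval_monomial]
  have hGm : G ∈ m.support := hmF ▸ hG
  rw [Finsupp.prod, Finset.prod_eq_zero hGm, mul_zero]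
  rw [ht]
  exact zero_pow (Finsupp.mem_support_iff.mp hGm)

/-- a real polynomial vanishing on the nonnegative orthant is zero -/
theorem eq_zero_of_eval_nonneg_zero (p : MvPolynomial σ ℝ)
    (h : ∀ t : σ → ℝ, (∀ i, 0 ≤ t i) → eval t p = 0) : p = 0 := by
  classical
  set sq : MvPolynomial σ ℝ := bind₁ (fun i => X i * X i) p with hsq
  have hsq0 : sq = 0 := by
    apply MvPolynomial.funext (q := 0)
    intro x
    rw [hsq, eval_bind₁', map_zero]
    have : (fun i => eval x (X i * X i)) = fun i => x i * x i := by
      funext i; simp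
    rw [this]
    exact h _ (fun i => mul_self_nonneg (x i))
  have key : ∀ m : σ →₀ ℕ, coeff (m + m) sq = coeff m p := by
    intro m
    have expand : sq = ∑ m' ∈ p.support, monomial (m' + m') (coeff m' p) := by
      rw [hsq]
      conv_lhs => rw [p.as_sum]
      rw [map_sum]
      apply Finset.sum_congr rfl
      intro m' _
      rw [bind₁_monomial]
      rw [show (monomial (m' + m') (coeff m' p)) = monomial m' (coeff m' p) * monomial m' 1 by
        rw [monomial_mul, mul_one]]
      rw [monomial_eq, monomial_eq, C_1, one_mul, mul_assoc]
      congr 1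
      simp only [Finsupp.prod]
      rw [← Finset.prod_mul_distrib]
      apply Finset.prod_congr rfl
      intro i _
      rw [mul_pow]
    rw [expand, coeff_sum]
    simp only [coeff_monomial]
    by_cases hm : m ∈ p.support
    · rw [Finset.sum_eq_single m]
      · simp
      · intro b _ hb
        rw [if_neg]
        intro e
        apply hb
        ext i
        have := DFunLike.congr_fun e i
        simp only [Finsupp.add_apply] at this
        omega
      · intro hc; exact absurd hm hc
    · rw [MvPolynomial.notMem_support_iff.mp hm]
      apply Finset.sum_eq_zero
      intro b hb
      rw [if_neg]
      intro e
      apply hm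
      have : b = m := by
        ext i
        have := DFunLike.congr_fun e i
        simp only [Finsupp.add_apply] at this
        omega
      exact this ▸ hb
  apply MvPolynomial.ext
  intro m
  rw [← key m, hsq0]
  simp

end PWAux


open PWAux

set_option maxHeartbeats 2000000 in
/-- Proposition `iso`: for a simple `d`-polytope `P` (given by facet normals
`ξ Γ` and support numbers `H Γ`, with vertex set `V`), the ring of continuous
piecewise polynomial functions on the dual fan modulo the ideal generated by
global linear functions is isomorphic to the polytope algebra
`A(Σ) = ℝ[∂_Γ] / (incidence relations, translation invariance)`, the
isomorphism sending the class of the characteristic function `χ Γ` of the ray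
spanned by `ξ Γ` to `∂_Γ`, and the class of the support function `S_Σ` to the
Lefschetz element `L_Σ = ∑ H_Γ ∂_Γ`. -/
theorem piecewise_polynomials_iso_polytope_algebra
    (d : ℕ) (hd : 1 ≤ d) (ι : Type) [Fintype ι] [DecidableEq ι]
    (ξ : ι → (Fin d → ℝ)) (H : ι → ℝ)
    (V : Finset (Fin d → ℝ)) (hV : V.Nonempty)
    (P : Set (Fin d → ℝ))
    -- `P` is the polytope with facet normals `ξ Γ` and support numbers `H Γ`
    (hP : P = {x | ∀ G : ι, ξ G ⬝ᵥ x ≤ H G})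
    -- `V` is its vertex set
    (hPV : P = convexHull ℝ (V : Set (Fin d → ℝ)))
    (hvert : ∀ v ∈ V, ∀ w ∈ V, v ≠ w → ∃ G : ι, ξ G ⬝ᵥ v = H G ∧ ξ G ⬝ᵥ w < H G)
    -- simplicity: each vertex lies on exactly `d` facets
    (hsimple : ∀ v ∈ V, (Finset.univ.filter fun G : ι => ξ G ⬝ᵥ v = H G).card = d)
    -- the ring `O_Ψ` of continuous functions, polynomial on each maximal cone
    -- of the dual fan (the normal cones of the vertices)
    (O : Subring ((Fin d → ℝ) → ℝ))
    (hO : ∀ g : (Fin d → ℝ) → ℝ, g ∈ O ↔ Continuous g ∧ ∀ v ∈ V,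
      ∃ p : MvPolynomial (Fin d) ℝ,
        ∀ u : Fin d → ℝ, (∀ x ∈ P, u ⬝ᵥ x ≤ u ⬝ᵥ v) → g u = eval u p)
    -- the support function `S_Σ` of the polytope
    (S : (Fin d → ℝ) → ℝ) (hSdef : ∀ u, S u = V.sup' hV fun x => u ⬝ᵥ x)
    (hSO : S ∈ O)
    -- characteristic functions of the rays dual to the facets
    (χ : ι → ((Fin d → ℝ) → ℝ)) (hχO : ∀ G, χ G ∈ O)
    (hχlin : ∀ G : ι, ∀ v ∈ V, ∃ a : Fin d → ℝ,
      ∀ u : Fin d → ℝ, (∀ x ∈ P, u ⬝ᵥ x ≤ u ⬝ᵥ v) → χ G u = a ⬝ᵥ u)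
    (hχzero : ∀ G G' : ι, G ≠ G' → ∀ t : ℝ, 0 ≤ t → χ G (t • ξ G') = 0)
    (hχone : ∀ G : ι, χ G (ξ G) = 1) :
    -- conclusion: `O/O⁺ ≅ A(Σ)`, `S_Σ ↦ L_Σ`, `χ_Γ ↦ ∂_Γ`
    ∃ e : (O ⧸ (Ideal.span {g : O | ∃ a : Fin d → ℝ,
            ∀ u, (g : (Fin d → ℝ) → ℝ) u = a ⬝ᵥ u})) ≃+*
          (MvPolynomial ι ℝ ⧸ (Ideal.span
            ({x : MvPolynomial ι ℝ | ∃ S' : Finset ι, (¬ ∃ y ∈ P, ∀ G ∈ S', ξ G ⬝ᵥ y = H G) ∧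
                x = ∏ G ∈ S', X G} ∪
             {x | ∃ a : Fin d → ℝ, x = ∑ G : ι, C (ξ G ⬝ᵥ a) * X G}))),
      e (Ideal.Quotient.mk _ ⟨S, hSO⟩) =
          Ideal.Quotient.mk _ (∑ G : ι, C (H G) * X G) ∧
      ∀ G : ι, e (Ideal.Quotient.mk _ ⟨χ G, hχO G⟩) = Ideal.Quotient.mk _ (X G) := by
  classical
  -- the set of facets through a point
  set T : (Fin d → ℝ) → Finset ι := fun v => Finset.univ.filter fun G => ξ G ⬝ᵥ v = H G with hT
  have hTmem : ∀ v G, G ∈ T v ↔ ξ G ⬝ᵥ v = H G := by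
    intro v G; simp [hT]
  -- membership of the vertices in P
  have hmemP : ∀ w ∈ V, w ∈ P := by
    intro w hw
    rw [hPV]
    exact subset_convexHull ℝ _ hw
  have hPle : ∀ x ∈ P, ∀ G : ι, ξ G ⬝ᵥ x ≤ H G := by
    intro x hx G
    rw [hP] at hx
    exact hx G
  -- every direction is maximized at a vertex
  have cover : ∀ u : Fin d → ℝ, ∃ v ∈ V, ∀ x ∈ P, u ⬝ᵥ x ≤ u ⬝ᵥ v := by
    intro u
    obtain ⟨v, hvV, hmax⟩ := V.exists_max_image (fun x => u ⬝ᵥ x) hV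
    refine ⟨v, hvV, ?_⟩
    intro x hx
    rw [hPV] at hx
    have hconv : Convex ℝ {x : Fin d → ℝ | u ⬝ᵥ x ≤ u ⬝ᵥ v} := by
      apply convex_halfSpace_le
      constructor
      · intro a b; exact dotProduct_add u a b
      · intro c a; rw [dotProduct_smul]
    exact convexHull_min hmax hconv hx
  -- a vector orthogonal to all facet normals through a vertex is zero
  have orth : ∀ v ∈ V, ∀ u : Fin d → ℝ, (∀ G ∈ T v, ξ G ⬝ᵥ u = 0) → u = 0 := by
    intro v hv u hu
    -- a positive step size keeping `v + ε • u` in `P`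
    set s : Finset ι := Finset.univ.filter (fun G => G ∉ T v) with hs
    have gaps : ∀ G ∈ s, 0 < H G - ξ G ⬝ᵥ v := by
      intro G hG
      have hne : ¬ (ξ G ⬝ᵥ v = H G) := by
        have := (Finset.mem_filter.mp hG).2
        rw [hTmem] at this; exact this
      have hle := hPle v (hmemP v hv) G
      have : ξ G ⬝ᵥ v < H G := lt_of_le_of_ne hle hne
      linarith
    set ε : ℝ := if hsne : s.Nonempty then
        s.inf' hsne (fun G => (H G - ξ G ⬝ᵥ v) / (1 + |ξ G ⬝ᵥ u|)) else 1 with hε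
    have hεpos : 0 < ε := by
      rw [hε]
      split
      · rename_i hsne
        rw [Finset.lt_inf'_iff]
        intro G hG
        apply div_pos (gaps G hG)
        have := abs_nonneg (ξ G ⬝ᵥ u); linarith
      · exact one_pos
    have hεle : ∀ G ∈ s, ε ≤ (H G - ξ G ⬝ᵥ v) / (1 + |ξ G ⬝ᵥ u|) := by
      intro G hG
      rw [hε]
      rw [dif_pos ⟨G, hG⟩]
      exact Finset.inf'_le _ hG
    have hin : v + ε • u ∈ P := by
      rw [hP]
      intro G
      rw [dotProduct_add, dotProduct_smul]
      by_cases hGT : G ∈ T v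
      · rw [hu G hGT]
        rw [(hTmem v G).mp hGT]
        simp
      · have hGs : G ∈ s := by
          rw [hs]; exact Finset.mem_filter.mpr ⟨Finset.mem_univ G, hGT⟩
        have h1 : (0:ℝ) < 1 + |ξ G ⬝ᵥ u| := by have := abs_nonneg (ξ G ⬝ᵥ u); linarith
        have h2 : ε * (1 + |ξ G ⬝ᵥ u|) ≤ H G - ξ G ⬝ᵥ v := by
          rw [← le_div_iff₀ h1]
          exact hεle G hGs
        have h3 : ε • (ξ G ⬝ᵥ u) ≤ ε * (1 + |ξ G ⬝ᵥ u|) := by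
          have hle := le_abs_self (ξ G ⬝ᵥ u)
          have : ε * (ξ G ⬝ᵥ u) ≤ ε * |ξ G ⬝ᵥ u| :=
            mul_le_mul_of_nonneg_left hle (le_of_lt hεpos)
          have h4 : ε * |ξ G ⬝ᵥ u| ≤ ε * (1 + |ξ G ⬝ᵥ u|) := by nlinarith
          calc ε • (ξ G ⬝ᵥ u) = ε * (ξ G ⬝ᵥ u) := rfl
            _ ≤ ε * |ξ G ⬝ᵥ u| := this
            _ ≤ ε * (1 + |ξ G ⬝ᵥ u|) := h4
        linarith
    -- a functional strictly maximized at `v` among vertices, constant on the move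
    have hvmem : ∀ w : {w // w ∈ V.erase v}, w.1 ∈ V := fun w => Finset.mem_of_mem_erase w.2
    have hvne : ∀ w : {w // w ∈ V.erase v}, v ≠ w.1 :=
      fun w => (Finset.ne_of_mem_erase w.2).symm
    set sel : {w // w ∈ V.erase v} → ι :=
      fun w => (hvert v hv w.1 (hvmem w) (hvne w)).choose with hseldef
    have hsel1 : ∀ w, ξ (sel w) ⬝ᵥ v = H (sel w) :=
      fun w => (hvert v hv w.1 (hvmem w) (hvne w)).choose_spec.1
    have hsel2 : ∀ w, ξ (sel w) ⬝ᵥ w.1 < H (sel w) :=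
      fun w => (hvert v hv w.1 (hvmem w) (hvne w)).choose_spec.2
    set u₀ : Fin d → ℝ := ∑ w ∈ (V.erase v).attach, ξ (sel w) with hu₀
    have hu₀v : u₀ ⬝ᵥ v = ∑ w ∈ (V.erase v).attach, H (sel w) := by
      rw [hu₀, sum_dot]
      exact Finset.sum_congr rfl (fun w _ => hsel1 w)
    have hu₀u : u₀ ⬝ᵥ u = 0 := by
      rw [hu₀, sum_dot]
      apply Finset.sum_eq_zero
      intro w _
      apply hu
      rw [hTmem]
      exact hsel1 w
    have hstrict : ∀ w' ∈ V, w' ≠ v → u₀ ⬝ᵥ w' < u₀ ⬝ᵥ v := by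
      intro w' hw' hne
      rw [hu₀v, hu₀, sum_dot]
      apply Finset.sum_lt_sum
      · intro w _
        exact hPle w' (hmemP w' hw') (sel w)
      · refine ⟨⟨w', Finset.mem_erase.mpr ⟨hne, hw'⟩⟩, Finset.mem_attach _ _, ?_⟩
        exact hsel2 ⟨w', Finset.mem_erase.mpr ⟨hne, hw'⟩⟩
    -- write `v + ε • u` as a convex combination of vertices
    have hx : v + ε • u ∈ convexHull ℝ (V : Set (Fin d → ℝ)) := by rw [← hPV]; exact hin
    rw [Finset.convexHull_eq] at hx
    obtain ⟨wgt, hw0, hw1, hwc⟩ := hx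
    have hcm : ∑ y ∈ V, wgt y • y = v + ε • u := by
      rw [← hwc, Finset.centerMass_eq_of_sum_1 V id hw1]
      rfl
    have hdot : u₀ ⬝ᵥ (v + ε • u) = u₀ ⬝ᵥ v := by
      rw [dotProduct_add, dotProduct_smul, hu₀u]
      simp
    have hsum1 : ∑ y ∈ V, wgt y * (u₀ ⬝ᵥ y) = ∑ y ∈ V, wgt y * (u₀ ⬝ᵥ v) := by
      have e1 : ∑ y ∈ V, wgt y * (u₀ ⬝ᵥ y) = u₀ ⬝ᵥ (v + ε • u) := by
        rw [← hcm, dot_sum]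
        apply Finset.sum_congr rfl
        intro y _
        rw [dot_smul']
      have e2 : ∑ y ∈ V, wgt y * (u₀ ⬝ᵥ v) = u₀ ⬝ᵥ v := by
        rw [← Finset.sum_mul, hw1, one_mul]
      rw [e1, e2, hdot]
    have heach : ∀ y ∈ V, wgt y * (u₀ ⬝ᵥ y) = wgt y * (u₀ ⬝ᵥ v) := by
      have hle : ∀ y ∈ V, wgt y * (u₀ ⬝ᵥ y) ≤ wgt y * (u₀ ⬝ᵥ v) := by
        intro y hy
        by_cases hyv : y = v
        · subst hyv; exact le_refl _
        · exact mul_le_mul_of_nonneg_left (le_of_lt (hstrict y hy hyv)) (hw0 y hy)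
      exact (Finset.sum_eq_sum_iff_of_le hle).mp hsum1
    have hwz : ∀ y ∈ V, y ≠ v → wgt y = 0 := by
      intro y hy hyv
      by_contra hne
      have hpos : 0 < wgt y := lt_of_le_of_ne (hw0 y hy) (Ne.symm hne)
      have := heach y hy
      have := mul_lt_mul_of_pos_left (hstrict y hy hyv) hpos
      linarith
    have hfin : v + ε • u = wgt v • v := by
      rw [← hcm]
      apply Finset.sum_eq_single v
      · intro y hy hyv
        rw [hwz y hy hyv, zero_smul]
      · intro hvv; exact absurd hv hvv
    have hwv : wgt v = 1 := by
      rw [← hw1]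
      symm
      apply Finset.sum_eq_single v
      · intro y hy hyv; exact hwz y hy hyv
      · intro hvv; exact absurd hv hvv
    rw [hwv, one_smul] at hfin
    have h0 : ε • u = 0 := by rwa [add_eq_left] at hfin
    exact (smul_eq_zero.mp h0).resolve_left (ne_of_gt hεpos)
  -- the facet normals through a vertex span
  have span : ∀ v ∈ V, ∀ u : Fin d → ℝ, ∃ c : ι → ℝ, u = ∑ G ∈ T v, c G • ξ G := by
    intro v hv u
    have hcard : (T v).card = d := hsimple v hv
    set e : Fin d ≃ {G // G ∈ T v} := (finCongr hcard.symm).trans (T v).equivFin.symm with he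
    set M : Matrix (Fin d) (Fin d) ℝ := Matrix.of (fun i j => ξ (e i).1 j) with hM
    have hrow : ∀ (i : Fin d) (w : Fin d → ℝ), (M *ᵥ w) i = ξ (e i).1 ⬝ᵥ w := by
      intro i w
      simp [Matrix.mulVec, hM, dotProduct]
    have hdet : M.det ≠ 0 := by
      intro h0
      obtain ⟨w, hw0, hMw⟩ := Matrix.exists_mulVec_eq_zero_iff.mpr h0
      apply hw0
      apply orth v hv
      intro G hG
      have h1 := congrFun hMw (e.symm ⟨G, hG⟩)
      have h2 : (M *ᵥ w) (e.symm ⟨G, hG⟩) = ξ G ⬝ᵥ w := by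
        rw [hrow]
        congr 1
        rw [Equiv.apply_symm_apply]
      rw [h2] at h1
      simpa using h1
    have hunit : IsUnit M.det := isUnit_iff_ne_zero.mpr hdet
    set c' : Fin d → ℝ := Matrix.vecMul u M⁻¹ with hc'
    have hcu : Matrix.vecMul c' M = u := by
      rw [hc', Matrix.vecMul_vecMul, Matrix.nonsing_inv_mul M hunit, Matrix.vecMul_one]
    have hcomp : ∀ j, u j = ∑ i : Fin d, c' i * ξ (e i).1 j := by
      intro j
      conv_lhs => rw [← hcu]
      simp [Matrix.vecMul, dotProduct, hM]
    have key : ∑ G ∈ T v, (if hG : G ∈ T v then c' (e.symm ⟨G, hG⟩) else 0) • ξ G = u := by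
      rw [← Finset.sum_attach (T v)
        (fun G => (if hG : G ∈ T v then c' (e.symm ⟨G, hG⟩) else 0) • ξ G)]
      have hc1 : ∀ w ∈ (T v).attach,
          (if hG : w.1 ∈ T v then c' (e.symm ⟨w.1, hG⟩) else 0) • ξ w.1
            = c' (e.symm w) • ξ w.1 := by
        intro w _
        rw [dif_pos w.2]
      rw [Finset.sum_congr rfl hc1, ← Finset.univ_eq_attach,
        ← Equiv.sum_comp e (fun w => c' (e.symm w) • ξ w.1)]
      have hc2 : ∀ i ∈ (Finset.univ : Finset (Fin d)),
          c' (e.symm (e i)) • ξ (e i).1 = c' i • ξ (e i).1 := by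
        intro i _
        rw [Equiv.symm_apply_apply]
      rw [Finset.sum_congr rfl hc2]
      funext j
      rw [Finset.sum_apply, hcomp j]
      apply Finset.sum_congr rfl
      intro i _
      rfl
    exact ⟨_, key.symm⟩
  -- local linear forms for the Courant functions
  choose A hA using hχlin
  -- values of the Courant functions on a normal cone
  have hχvals : ∀ v, ∀ hv : v ∈ V, ∀ u : Fin d → ℝ, (∀ x ∈ P, u ⬝ᵥ x ≤ u ⬝ᵥ v) →
      ∀ c : ι → ℝ, u = ∑ G ∈ T v, c G • ξ G → ∀ G, χ G u = if G ∈ T v then c G else 0 := by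
    intro v hv u hNC c hc G
    have hNCray : ∀ G' ∈ T v, ∀ x ∈ P, ξ G' ⬝ᵥ x ≤ ξ G' ⬝ᵥ v := by
      intro G' hG' x hx
      rw [(hTmem v G').mp hG']
      exact hPle x hx G'
    have hAval : ∀ G' ∈ T v, A G v hv ⬝ᵥ ξ G' = if G = G' then 1 else 0 := by
      intro G' hG'
      rw [← hA G v hv (ξ G') (hNCray G' hG')]
      by_cases hGG : G = G'
      · subst hGG; rw [if_pos rfl]; exact hχone G
      · rw [if_neg hGG]
        have := hχzero G G' hGG 1 zero_le_one
        rwa [one_smul] at this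
    calc χ G u = A G v hv ⬝ᵥ u := hA G v hv u hNC
      _ = ∑ G' ∈ T v, c G' * (A G v hv ⬝ᵥ ξ G') := by
          conv_lhs => rw [hc]
          rw [dot_sum]
          exact Finset.sum_congr rfl (fun G' _ => dot_smul' (c G') _ _)
      _ = ∑ G' ∈ T v, (if G = G' then c G' else 0) := by
          apply Finset.sum_congr rfl
          intro G' hG'
          rw [hAval G' hG']
          split <;> simp
      _ = if G ∈ T v then c G else 0 := Finset.sum_ite_eq (T v) G c
  -- conic combinations of facet normals through `v` lie in the normal cone of `v`
  have hχpt : ∀ v, ∀ hv : v ∈ V, ∀ F ⊆ T v, ∀ t : ι → ℝ, (∀ G, 0 ≤ t G) →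
      (∀ x ∈ P, (∑ G ∈ F, t G • ξ G) ⬝ᵥ x ≤ (∑ G ∈ F, t G • ξ G) ⬝ᵥ v) ∧
      (∀ G, χ G (∑ G' ∈ F, t G' • ξ G') = if G ∈ F then t G else 0) := by
    intro v hv F hF t ht
    have hNC : ∀ x ∈ P, (∑ G ∈ F, t G • ξ G) ⬝ᵥ x ≤ (∑ G ∈ F, t G • ξ G) ⬝ᵥ v := by
      intro x hx
      rw [sum_dot, sum_dot]
      apply Finset.sum_le_sum
      intro G hG
      rw [smul_dotProduct, smul_dotProduct, smul_eq_mul, smul_eq_mul]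
      have h1 : ξ G ⬝ᵥ x ≤ ξ G ⬝ᵥ v := by
        rw [(hTmem v G).mp (hF hG)]
        exact hPle x hx G
      exact mul_le_mul_of_nonneg_left h1 (ht G)
    refine ⟨hNC, ?_⟩
    intro G
    have hrep : (∑ G' ∈ F, t G' • ξ G') = ∑ G' ∈ T v, (if G' ∈ F then t G' else 0) • ξ G' := by
      have h1 : ∀ G' ∈ T v, (if G' ∈ F then t G' else 0) • ξ G'
          = if G' ∈ F then t G' • ξ G' else 0 := by
        intro G' _
        split <;> simp
      rw [Finset.sum_congr rfl h1, ← Finset.sum_filter, Finset.filter_mem_eq_inter,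
        Finset.inter_eq_right.mpr hF]
    have h2 := hχvals v hv _ hNC (fun G' => if G' ∈ F then t G' else 0) hrep G
    rw [h2]
    by_cases hGF : G ∈ F
    · simp only [if_pos (hF hGF), if_pos hGF]
    · simp only [if_neg hGF]
      split <;> simp [hGF]
  -- the evaluation homomorphism
  set Φ : MvPolynomial ι ℝ →+* ((Fin d → ℝ) → ℝ) :=
    Pi.ringHom (fun u => (eval (fun G => χ G u) : MvPolynomial ι ℝ →+* ℝ)) with hΦdef
  have hΦ : ∀ p u, Φ p u = eval (fun G => χ G u) p := fun _ _ => rfl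
  have hΦmem : ∀ p, Φ p ∈ O := by
    intro p
    induction p using MvPolynomial.induction_on with
    | C a =>
        have h1 : Φ (C a) = fun _ => a := by
          funext u; rw [hΦ]; simp
        rw [h1, hO]
        exact ⟨continuous_const, fun v _ => ⟨MvPolynomial.C a, fun u _ => by simp⟩⟩
    | add p q hp hq =>
        rw [map_add]
        exact O.add_mem hp hq
    | mul_X p G hp =>
        rw [_root_.map_mul]
        apply O.mul_mem hp
        have h1 : Φ (X G) = χ G := by
          funext u; rw [hΦ]; simp
        rw [h1]
        exact hχO G
  -- local polynomial models
  have hloc : ∀ g ∈ O, ∀ v, ∀ hv : v ∈ V, ∃ q : MvPolynomial ι ℝ,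
      resP (T v) q = q ∧ ∀ u, (∀ x ∈ P, u ⬝ᵥ x ≤ u ⬝ᵥ v) → eval (fun G => χ G u) q = g u := by
    intro g hg v hv
    obtain ⟨-, hpoly⟩ := (hO g).mp hg
    obtain ⟨p, hp⟩ := hpoly v hv
    refine ⟨bind₁ (fun i => ∑ G ∈ T v, (C (ξ G i) * X G : MvPolynomial ι ℝ)) p, ?_, ?_⟩
    · rw [resP, bind₁_bind₁]
      have hfun : (fun i => (bind₁ fun i => if i ∈ T v then X i else 0)
            (∑ G ∈ T v, (C (ξ G i) * X G : MvPolynomial ι ℝ)))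
          = fun i => ∑ G ∈ T v, (C (ξ G i) * X G : MvPolynomial ι ℝ) := by
        funext i
        rw [map_sum]
        apply Finset.sum_congr rfl
        intro G hG
        rw [_root_.map_mul, bind₁_C_right, bind₁_X_right, if_pos hG]
      rw [hfun]
    · intro u hNC
      rw [eval_bind₁']
      obtain ⟨c, hc⟩ := span v hv u
      have hval : (fun i => eval (fun G => χ G u) (∑ G ∈ T v, (C (ξ G i) * X G : MvPolynomial ι ℝ))) = u := by
        funext i
        simp only [map_sum, _root_.map_mul, eval_C, eval_X]
        have hcv := hχvals v hv u hNC c hc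
        calc ∑ G ∈ T v, ξ G i * χ G u = ∑ G ∈ T v, ξ G i * c G := by
              apply Finset.sum_congr rfl
              intro G hG
              rw [hcv G, if_pos hG]
          _ = (∑ G ∈ T v, c G • ξ G) i := by
              rw [Finset.sum_apply]
              apply Finset.sum_congr rfl
              intro G _
              rw [Pi.smul_apply, smul_eq_mul, mul_comm]
          _ = u i := by rw [← hc]
      rw [hval]
      exact (hp u hNC).symm
  -- surjectivity
  have hsurj : ∀ g ∈ O, ∃ p : MvPolynomial ι ℝ, ∀ u, Φ p u = g u := by
    intro g hg
    choose q hq1 hq2 using hloc g hg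
    have welldef : ∀ (F : Finset ι) v₁ v₂ (hv₁ : v₁ ∈ V) (hv₂ : v₂ ∈ V), F ⊆ T v₁ → F ⊆ T v₂ →
        exaP F (q v₁ hv₁) = exaP F (q v₂ hv₂) := by
      intro F v₁ v₂ hv₁ hv₂ hF1 hF2
      have key : ∀ (w : Fin d → ℝ) (hw : w ∈ V), F ⊆ T w → ∀ t : ι → ℝ, (∀ G, 0 ≤ t G) →
          eval t (resP F (q w hw)) = g (∑ G ∈ F, t G • ξ G) := by
        intro w hw hFw t htnn
        rw [eval_resP]
        obtain ⟨hNCw, hχw⟩ := hχpt w hw F hFw t htnn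
        have heq : (fun G => if G ∈ F then t G else 0)
            = fun G => χ G (∑ G' ∈ F, t G' • ξ G') := by
          funext G
          rw [hχw G]
        rw [heq]
        exact hq2 w hw (∑ G' ∈ F, t G' • ξ G') hNCw
      have hres : resP F (q v₁ hv₁) = resP F (q v₂ hv₂) := by
        have hz : resP F (q v₁ hv₁) - resP F (q v₂ hv₂) = 0 := by
          apply eq_zero_of_eval_nonneg_zero
          intro t htnn
          rw [map_sub, key v₁ hv₁ hF1 t htnn, key v₂ hv₂ hF2 t htnn, sub_self]
        exact sub_eq_zero.mp hz
      rw [← exaP_resP (Finset.Subset.refl F) (q v₁ hv₁),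
        ← exaP_resP (Finset.Subset.refl F) (q v₂ hv₂), hres]
    set 𝔽 : Finset (Finset ι) := Finset.univ.filter (fun F => ∃ v ∈ V, F ⊆ T v) with h𝔽
    have hFmem : ∀ F ∈ 𝔽, ∃ v ∈ V, F ⊆ T v := fun F hF => (Finset.mem_filter.mp hF).2
    choose vsel hvsel1 hvsel2 using hFmem
    refine ⟨∑ F ∈ 𝔽.attach, exaP F.1 (q (vsel F.1 F.2) (hvsel1 F.1 F.2)), ?_⟩
    intro u
    obtain ⟨v, hv, hNC⟩ := cover u
    rw [hΦ, map_sum]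
    have hsplit : ∀ F : {F // F ∈ 𝔽},
        eval (fun G => χ G u) (exaP F.1 (q (vsel F.1 F.2) (hvsel1 F.1 F.2)))
        = if F.1 ⊆ T v then eval (fun G => χ G u) (exaP F.1 (q v hv)) else 0 := by
      intro F
      by_cases hFT : F.1 ⊆ T v
      · rw [if_pos hFT, welldef F.1 _ v (hvsel1 F.1 F.2) hv (hvsel2 F.1 F.2) hFT]
      · rw [if_neg hFT]
        obtain ⟨G, hGF, hGT⟩ := Finset.not_subset.mp hFT
        apply eval_exaP_eq_zero hGF
        obtain ⟨c, hc⟩ := span v hv u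
        rw [hχvals v hv u hNC c hc G, if_neg hGT]
    rw [Finset.sum_congr rfl (fun F _ => hsplit F)]
    rw [Finset.sum_attach 𝔽
      (fun F => if F ⊆ T v then eval (fun G => χ G u) (exaP F (q v hv)) else 0)]
    rw [← Finset.sum_filter]
    have hfilt : 𝔽.filter (fun F => F ⊆ T v) = (T v).powerset := by
      ext F
      simp only [Finset.mem_filter, Finset.mem_powerset, h𝔽, Finset.mem_univ, true_and]
      constructor
      · rintro ⟨-, h⟩; exact h
      · intro h; exact ⟨⟨v, hv, h⟩, h⟩
    rw [hfilt, ← map_sum, ← resP_eq_sum_exaP, hq1 v hv]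
    exact hq2 v hv u hNC
  -- faces contain vertices
  have hface : ∀ S' : Finset ι, (∃ y ∈ P, ∀ G ∈ S', ξ G ⬝ᵥ y = H G) → ∃ v ∈ V, S' ⊆ T v := by
    rintro S' ⟨y, hyP, hty⟩
    have hy : y ∈ convexHull ℝ (V : Set (Fin d → ℝ)) := by rw [← hPV]; exact hyP
    rw [Finset.convexHull_eq] at hy
    obtain ⟨wgt, hw0, hw1, hwc⟩ := hy
    have hcm : ∑ x ∈ V, wgt x • x = y := by
      rw [← hwc, Finset.centerMass_eq_of_sum_1 V id hw1]
      rfl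
    have hzex : ∃ z ∈ V, 0 < wgt z := by
      by_contra hcon
      push_neg at hcon
      have : ∑ x ∈ V, wgt x = 0 := by
        apply Finset.sum_eq_zero
        intro x hx
        exact le_antisymm (hcon x hx) (hw0 x hx)
      rw [hw1] at this
      exact one_ne_zero this
    obtain ⟨z, hz, hzpos⟩ := hzex
    refine ⟨z, hz, ?_⟩
    intro G hGS'
    rw [hTmem]
    have hsum : ∑ x ∈ V, wgt x * (ξ G ⬝ᵥ x) = H G := by
      have h1 : ξ G ⬝ᵥ y = H G := hty G hGS'
      rw [← h1, ← hcm, dot_sum]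
      apply Finset.sum_congr rfl
      intro x _
      rw [dot_smul']
    have hconst : ∑ x ∈ V, wgt x * H G = H G := by
      rw [← Finset.sum_mul, hw1, one_mul]
    have hle : ∀ x ∈ V, wgt x * (ξ G ⬝ᵥ x) ≤ wgt x * H G := by
      intro x hx
      exact mul_le_mul_of_nonneg_left (hPle x (hmemP x hx) G) (hw0 x hx)
    have heach := (Finset.sum_eq_sum_iff_of_le hle).mp (by rw [hsum, hconst])
    have := heach z hz
    exact mul_left_cancel₀ (ne_of_gt hzpos) this
  have hχzero' : ∀ u v, v ∈ V → (∀ x ∈ P, u ⬝ᵥ x ≤ u ⬝ᵥ v) → ∀ G ∉ T v, χ G u = 0 := by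
    intro u v hv hNC G hGT
    obtain ⟨c, hc⟩ := span v hv u
    rw [hχvals v hv u hNC c hc G, if_neg hGT]
  -- non-faces evaluate to zero
  have hnonface : ∀ S' : Finset ι, (¬ ∃ y ∈ P, ∀ G ∈ S', ξ G ⬝ᵥ y = H G) →
      ∀ u, Φ (∏ G ∈ S', X G) u = 0 := by
    intro S' hnot u
    rw [hΦ, map_prod]
    simp only [eval_X]
    obtain ⟨v, hv, hNC⟩ := cover u
    have hns : ¬ S' ⊆ T v := by
      intro hsub
      exact hnot ⟨v, hmemP v hv, fun G hG => (hTmem v G).mp (hsub hG)⟩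
    obtain ⟨G, hGS, hGT⟩ := Finset.not_subset.mp hns
    apply Finset.prod_eq_zero hGS
    exact hχzero' u v hv hNC G hGT
  -- linear relations
  have hlin : ∀ a : Fin d → ℝ, ∀ u, Φ (∑ G : ι, C (ξ G ⬝ᵥ a) * X G) u = a ⬝ᵥ u := by
    intro a u
    rw [hΦ, map_sum]
    simp only [_root_.map_mul, eval_C, eval_X]
    obtain ⟨v, hv, hNC⟩ := cover u
    obtain ⟨c, hc⟩ := span v hv u
    have hχv := hχvals v hv u hNC c hc
    calc ∑ G : ι, (ξ G ⬝ᵥ a) * χ G u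
        = ∑ G : ι, (if G ∈ T v then (ξ G ⬝ᵥ a) * c G else 0) := by
          apply Finset.sum_congr rfl
          intro G _
          rw [hχv G]
          split <;> simp
      _ = ∑ G ∈ T v, (ξ G ⬝ᵥ a) * c G := by
          rw [← Finset.sum_filter, Finset.filter_mem_eq_inter, Finset.univ_inter]
      _ = a ⬝ᵥ u := by
          rw [hc, dot_sum]
          apply Finset.sum_congr rfl
          intro G _
          rw [dot_smul', dotProduct_comm]
          ring
  -- the support function is the Lefschetz combination
  have hSsum : ∀ u, Φ (∑ G : ι, C (H G) * X G) u = S u := by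
    intro u
    rw [hΦ, map_sum]
    simp only [_root_.map_mul, eval_C, eval_X]
    obtain ⟨v, hv, hNC⟩ := cover u
    obtain ⟨c, hc⟩ := span v hv u
    have hχv := hχvals v hv u hNC c hc
    have hSu : S u = u ⬝ᵥ v := by
      rw [hSdef]
      apply le_antisymm
      · apply Finset.sup'_le
        intro x hx
        exact hNC x (hmemP x hx)
      · exact Finset.le_sup' (fun x => u ⬝ᵥ x) hv
    rw [hSu]
    calc ∑ G : ι, H G * χ G u
        = ∑ G : ι, (if G ∈ T v then H G * c G else 0) := by
          apply Finset.sum_congr rfl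
          intro G _
          rw [hχv G]
          split <;> simp
      _ = ∑ G ∈ T v, H G * c G := by
          rw [← Finset.sum_filter, Finset.filter_mem_eq_inter, Finset.univ_inter]
      _ = u ⬝ᵥ v := by
          rw [hc, sum_dot]
          apply Finset.sum_congr rfl
          intro G hG
          rw [smul_dotProduct, smul_eq_mul, (hTmem v G).mp hG]
          ring
  -- kernel of Φ is contained in the Stanley-Reisner ideal
  have hker : ∀ p : MvPolynomial ι ℝ, (∀ u, Φ p u = 0) →
      p ∈ Ideal.span {x : MvPolynomial ι ℝ | ∃ S' : Finset ι,
        (¬ ∃ y ∈ P, ∀ G ∈ S', ξ G ⬝ᵥ y = H G) ∧ x = ∏ G ∈ S', X G} := by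
    intro p hp0
    set good : MvPolynomial ι ℝ :=
      ∑ m ∈ p.support.filter (fun m => ∃ v ∈ V, m.support ⊆ T v), monomial m (coeff m p)
      with hgood
    set bad : MvPolynomial ι ℝ :=
      ∑ m ∈ p.support.filter (fun m => ¬ ∃ v ∈ V, m.support ⊆ T v), monomial m (coeff m p)
      with hbad
    have hpgb : p = good + bad := by
      rw [hgood, hbad, Finset.sum_filter_add_sum_filter_not]
      exact p.as_sum
    have hbadmem : bad ∈ Ideal.span {x : MvPolynomial ι ℝ | ∃ S' : Finset ι,
        (¬ ∃ y ∈ P, ∀ G ∈ S', ξ G ⬝ᵥ y = H G) ∧ x = ∏ G ∈ S', X G} := by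
      rw [hbad]
      apply Ideal.sum_mem
      intro m hm
      have hm2 := (Finset.mem_filter.mp hm).2
      have hnf : ¬ ∃ y ∈ P, ∀ G ∈ (m.support : Finset ι), ξ G ⬝ᵥ y = H G := by
        intro hex
        exact hm2 (hface m.support hex)
      have hgen : (∏ G ∈ (m.support : Finset ι), X G : MvPolynomial ι ℝ) ∈
          Ideal.span {x : MvPolynomial ι ℝ | ∃ S' : Finset ι,
            (¬ ∃ y ∈ P, ∀ G ∈ S', ξ G ⬝ᵥ y = H G) ∧ x = ∏ G ∈ S', X G} :=
        Ideal.subset_span ⟨m.support, hnf, rfl⟩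
      have hfact : monomial m (coeff m p)
          = monomial (m - ∑ G ∈ m.support, Finsupp.single G 1) (coeff m p)
            * ∏ G ∈ m.support, X G := by
        have hms : (m - ∑ G ∈ m.support, Finsupp.single G 1)
            + ∑ G ∈ m.support, Finsupp.single G 1 = m := by
          ext i
          rw [Finsupp.add_apply, Finsupp.tsub_apply]
          have hs : (∑ G ∈ m.support, Finsupp.single G 1 : ι →₀ ℕ) i
              = if i ∈ m.support then 1 else 0 := by
            rw [Finsupp.coe_finset_sum, Finset.sum_apply]
            simp only [Finsupp.single_apply]
            rw [Finset.sum_ite_eq']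
          rw [hs]
          split
          · rename_i hi
            have h1 : m i ≠ 0 := Finsupp.mem_support_iff.mp hi
            omega
          · omega
        rw [prod_X_eq_monomial, monomial_mul, mul_one, hms]
      rw [hfact]
      exact Ideal.mul_mem_left _ _ hgen
    have hspan0 : ∀ x ∈ Ideal.span {x : MvPolynomial ι ℝ | ∃ S' : Finset ι,
        (¬ ∃ y ∈ P, ∀ G ∈ S', ξ G ⬝ᵥ y = H G) ∧ x = ∏ G ∈ S', X G}, ∀ u, Φ x u = 0 := by
      intro x hx u
      have hle : Ideal.span {x : MvPolynomial ι ℝ | ∃ S' : Finset ι,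
          (¬ ∃ y ∈ P, ∀ G ∈ S', ξ G ⬝ᵥ y = H G) ∧ x = ∏ G ∈ S', X G}
          ≤ RingHom.ker ((Pi.evalRingHom (fun _ : Fin d → ℝ => ℝ) u).comp Φ) := by
        rw [Ideal.span_le]
        rintro x ⟨S', hS', rfl⟩
        rw [SetLike.mem_coe, RingHom.mem_ker]
        exact hnonface S' hS' u
      exact hle hx
    have hgood0 : ∀ u, Φ good u = 0 := by
      intro u
      have h1 := hp0 u
      have h2 := hspan0 bad hbadmem u
      have h3 : Φ p u = Φ good u + Φ bad u := by
        rw [hpgb, map_add]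
        rfl
      rw [h1, h2] at h3
      linarith
    have hgz : good = 0 := by
      apply MvPolynomial.ext
      intro m
      rw [coeff_zero]
      have hcg : coeff m good
          = if m ∈ p.support.filter (fun m => ∃ v ∈ V, m.support ⊆ T v)
            then coeff m p else 0 := by
        rw [hgood, coeff_sum]
        simp only [coeff_monomial]
        by_cases hm : m ∈ p.support.filter (fun m => ∃ v ∈ V, m.support ⊆ T v)
        · rw [if_pos hm]
          rw [Finset.sum_eq_single m]
          · simp
          · intro b _ hb; simp [hb]
          · intro hc; exact absurd hm hc
        · rw [if_neg hm]
          apply Finset.sum_eq_zero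
          intro b hb
          have : b ≠ m := fun e => hm (e ▸ hb)
          simp [this]
      by_cases hmf : m ∈ p.support.filter (fun m => ∃ v ∈ V, m.support ⊆ T v)
      · obtain ⟨hm1, hm2⟩ := Finset.mem_filter.mp hmf
        obtain ⟨v, hv, hsub⟩ := hm2
        have hres0 : resP (T v) good = 0 := by
          apply eq_zero_of_eval_nonneg_zero
          intro t ht
          rw [eval_resP]
          obtain ⟨hNC, hχw⟩ := hχpt v hv (T v) (Finset.Subset.refl _) t ht
          have heq : (fun G => if G ∈ T v then t G else 0)
              = fun G => χ G (∑ G' ∈ T v, t G' • ξ G') := by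
            funext G
            rw [hχw G]
          rw [heq]
          exact hgood0 _
        have hcr := coeff_resP (T v) good m
        rw [hres0, coeff_zero, if_pos hsub] at hcr
        exact hcr.symm
      · rw [hcg, if_neg hmf]
    rw [hpgb, hgz, zero_add]
    exact hbadmem
  -- assembly
  set S1 : Set (MvPolynomial ι ℝ) := {x | ∃ S' : Finset ι,
      (¬ ∃ y ∈ P, ∀ G ∈ S', ξ G ⬝ᵥ y = H G) ∧ x = ∏ G ∈ S', X G} with hS1
  set S2 : Set (MvPolynomial ι ℝ) := {x | ∃ a : Fin d → ℝ, x = ∑ G : ι, C (ξ G ⬝ᵥ a) * X G}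
    with hS2
  set J_O : Ideal O := Ideal.span {g : O | ∃ a : Fin d → ℝ,
      ∀ u, (g : (Fin d → ℝ) → ℝ) u = a ⬝ᵥ u} with hJO
  set J_A : Ideal (MvPolynomial ι ℝ) := Ideal.span (S1 ∪ S2) with hJA
  set Φ' : MvPolynomial ι ℝ →+* O := Φ.codRestrict O hΦmem with hΦ'
  have hΦ'val : ∀ p, ((Φ' p : O) : (Fin d → ℝ) → ℝ) = Φ p := fun p => rfl
  have hΦ'surj : Function.Surjective Φ' := by
    intro g
    obtain ⟨p, hp⟩ := hsurj g.1 g.2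
    exact ⟨p, Subtype.ext (funext hp)⟩
  set Ψ : MvPolynomial ι ℝ →+* O ⧸ J_O := (Ideal.Quotient.mk J_O).comp Φ' with hΨ
  have hΨsurj : Function.Surjective Ψ := by
    rw [hΨ, RingHom.coe_comp]
    exact (Ideal.Quotient.mk_surjective).comp hΦ'surj
  have hkerΨ : RingHom.ker Ψ = J_A := by
    apply le_antisymm
    · intro p hp
      have h1 : Ideal.Quotient.mk J_O (Φ' p) = 0 := RingHom.mem_ker.mp hp
      have h2 : Φ' p ∈ J_O := (Ideal.Quotient.eq_zero_iff_mem).mp h1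
      have hJOmap : J_O = Ideal.map Φ' (Ideal.span S2) := by
        rw [Ideal.map_span, hJO]
        congr 1
        ext g
        constructor
        · rintro ⟨a, hg⟩
          refine ⟨∑ G : ι, C (ξ G ⬝ᵥ a) * X G, ⟨a, rfl⟩, ?_⟩
          apply Subtype.ext
          funext u
          exact (hlin a u).trans (hg u).symm
        · rintro ⟨x, ⟨a, rfl⟩, rfl⟩
          exact ⟨a, fun u => hlin a u⟩
      rw [hJOmap] at h2
      obtain ⟨q, hqmem, hq⟩ := (Ideal.mem_map_iff_of_surjective Φ' hΦ'surj).mp h2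
      have hΦpq : Φ q = Φ p := congrArg Subtype.val hq
      have hdiff : ∀ u, Φ (p - q) u = 0 := by
        intro u
        rw [map_sub, Pi.sub_apply, hΦpq, sub_self]
      have hpq := hker (p - q) hdiff
      have hrw : p = (p - q) + q := by ring
      rw [hrw, hJA]
      apply Ideal.add_mem
      · exact Ideal.span_mono Set.subset_union_left hpq
      · exact Ideal.span_mono Set.subset_union_right hqmem
    · rw [hJA, Ideal.span_le]
      rintro x (⟨S', hS', rfl⟩ | ⟨a, rfl⟩)
      · rw [SetLike.mem_coe, RingHom.mem_ker, hΨ, RingHom.comp_apply,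
          Ideal.Quotient.eq_zero_iff_mem]
        have hz : Φ' (∏ G ∈ S', X G) = 0 :=
          Subtype.ext (funext (hnonface S' hS'))
        rw [hz]
        exact J_O.zero_mem
      · rw [SetLike.mem_coe, RingHom.mem_ker, hΨ, RingHom.comp_apply,
          Ideal.Quotient.eq_zero_iff_mem, hJO]
        apply Ideal.subset_span
        exact ⟨a, fun u => hlin a u⟩
  have hmkS : ∀ p : MvPolynomial ι ℝ, ∀ gO : O, Φ' p = gO →
      Ψ p = Ideal.Quotient.mk J_O gO := by
    intro p gO hpg
    rw [hΨ, RingHom.comp_apply, hpg]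
  refine ⟨((Ideal.quotEquivOfEq hkerΨ.symm).trans
    (RingHom.quotientKerEquivOfSurjective hΨsurj)).symm, ?_, ?_⟩
  · have key : ((Ideal.quotEquivOfEq hkerΨ.symm).trans
        (RingHom.quotientKerEquivOfSurjective hΨsurj))
        (Ideal.Quotient.mk J_A (∑ G : ι, C (H G) * X G))
        = Ideal.Quotient.mk J_O ⟨S, hSO⟩ := by
      rw [RingEquiv.trans_apply, Ideal.quotEquivOfEq_mk]
      have h1 : (RingHom.quotientKerEquivOfSurjective hΨsurj)
          (Ideal.Quotient.mk (RingHom.ker Ψ) (∑ G : ι, C (H G) * X G))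
          = Ψ (∑ G : ι, C (H G) * X G) := RingHom.kerLift_mk Ψ _
      rw [h1]
      apply hmkS
      exact Subtype.ext (funext fun u => hSsum u)
    rw [← key, RingEquiv.symm_apply_apply]
  · intro G
    have key : ((Ideal.quotEquivOfEq hkerΨ.symm).trans
        (RingHom.quotientKerEquivOfSurjective hΨsurj))
        (Ideal.Quotient.mk J_A (X G))
        = Ideal.Quotient.mk J_O ⟨χ G, hχO G⟩ := by
      rw [RingEquiv.trans_apply, Ideal.quotEquivOfEq_mk]
      have h1 : (RingHom.quotientKerEquivOfSurjective hΨsurj)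
          (Ideal.Quotient.mk (RingHom.ker Ψ) (X G))
          = Ψ (X G) := RingHom.kerLift_mk Ψ _
      rw [h1]
      apply hmkS
      apply Subtype.ext
      funext u
      rw [hΦ'val, hΦ]
      simp
    rw [← key, RingEquiv.symm_apply_apply]
end
end
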